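/- arXiv:2409.05822 — 7 statements merged into one kernel-verified Lean document; each statement's English description precedes it below -/
import Mathlib

section
/- For any integer n ≥ 2, the iterated integral ∫₀¹ ∫₀^{x₁} ⋯ ∫₀^{x_{n-1}} 1/(x₁·x₂·⋯·x_{n-1}·(1+x_n)) dx_n ⋯ dx₁ equals ((2^{n-1} − 1)/2^{n-1})·ζ(n), where ζ is the Riemann zeta function. -/
/-- Iterated inner integrals of the invariant density of the triangle map:
`triIter 1 t = ∫₀^t 1/(1+s) ds`, `triIter (m+1) t = ∫₀^t triIter m s / s ds`. -/
noncomputable def triIter : ℕ → ℝ → ℝ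
  | 0, t => 1 / (1 + t)
  | 1, t => ∫ s in (0 : ℝ)..t, 1 / (1 + s)
  | (m + 2), t => ∫ s in (0 : ℝ)..t, triIter (m + 1) s / s

/-!
Expanding `1/(1+s)` as a geometric series and integrating termwise, each inner integral
`∫₀^t (·)/s ds` raises the exponent in the denominator by one, so for `m ≥ 1` and
`0 ≤ t < 1`, `triIter m t = ∑ₖ (-1)ᵏ t^(k+1)/(k+1)^m = -Li_m(-t)`. The outer integral is
therefore the Dirichlet eta value `η(n) = ∑ₖ (-1)ᵏ/(k+1)^n`, and `ζ(n) - η(n)` is twice the sum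
over the even denominators `(2k+2)^n`, i.e. `2^(1-n) ζ(n)`.
-/

open MeasureTheory Set

/-- `altPolylog m t = -Li_m(-t)`. -/
noncomputable def altPolylog (m : ℕ) (t : ℝ) : ℝ :=
  ∑' k : ℕ, (-1) ^ k * t ^ (k + 1) / ((k : ℝ) + 1) ^ m

lemma summable_one_div_succ_pow {n : ℕ} (hn : 2 ≤ n) :
    Summable fun k : ℕ => 1 / ((k : ℝ) + 1) ^ n :=
  (summable_nat_add_iff 1).mpr (Real.summable_one_div_nat_pow.mpr hn) |>.congr fun k => by
    push_cast; ring

lemma summable_pow_succ_div_succ_pow (m : ℕ) {t : ℝ} (ht0 : 0 ≤ t) (ht1 : t < 1) :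
    Summable fun k : ℕ => t ^ (k + 1) / ((k : ℝ) + 1) ^ m := by
  refine (summable_geometric_of_lt_one ht0 ht1).of_nonneg_of_le (fun k => by positivity)
    fun k => ?_
  calc t ^ (k + 1) / ((k : ℝ) + 1) ^ m ≤ t ^ (k + 1) := div_le_self (by positivity) (by bound)
    _ ≤ t ^ k := pow_le_pow_of_le_one ht0 ht1.le k.le_succ

lemma setIntegral_Ioc_zero_pow (k : ℕ) {t : ℝ} (ht : 0 ≤ t) :
    ∫ s in Ioc 0 t, s ^ k = t ^ (k + 1) / (k + 1) := by
  rw [← intervalIntegral.integral_of_le ht, integral_pow]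
  simp

theorem intervalIntegral_tsum_mul_pow {a : ℕ → ℝ} {t : ℝ} (ht : 0 ≤ t)
    (h : Summable fun k => |a k| * (t ^ (k + 1) / (k + 1))) :
    ∫ s in (0 : ℝ)..t, ∑' k, a k * s ^ k = ∑' k, a k * (t ^ (k + 1) / (k + 1)) := by
  have hnorm (k : ℕ) : ∫ s in Ioc 0 t, ‖a k * s ^ k‖ = |a k| * (t ^ (k + 1) / (k + 1)) := by
    rw [← setIntegral_Ioc_zero_pow k ht, ← integral_const_mul]
    refine setIntegral_congr_fun measurableSet_Ioc fun s hs => ?_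
    simp [abs_of_nonneg hs.1.le]
  rw [intervalIntegral.integral_of_le ht, ← integral_tsum_of_summable_integral_norm
    (F := fun k s => a k * s ^ k)
    (fun k => (continuous_const.mul (continuous_pow k)).integrableOn_Ioc)
    (by simpa only [hnorm] using h)]
  simp only [integral_const_mul, setIntegral_Ioc_zero_pow _ ht]

lemma integral_tsum_eq_altPolylog_succ (m : ℕ) {t : ℝ} (ht : 0 ≤ t)
    (h : Summable fun k : ℕ => t ^ (k + 1) / ((k : ℝ) + 1) ^ (m + 1)) :
    ∫ s in (0 : ℝ)..t, ∑' k : ℕ, (-1) ^ k / ((k : ℝ) + 1) ^ m * s ^ k = altPolylog (m + 1) t := by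
  rw [intervalIntegral_tsum_mul_pow ht, altPolylog]
  · refine tsum_congr fun k => ?_
    field_simp
    ring
  · refine h.congr fun k => ?_
    rw [abs_div, abs_pow, abs_neg, abs_one, one_pow, abs_of_pos (by positivity)]
    field_simp
    ring

lemma altPolylog_div_self (m : ℕ) {t : ℝ} (ht : t ≠ 0) :
    altPolylog m t / t = ∑' k : ℕ, (-1) ^ k / ((k : ℝ) + 1) ^ m * t ^ k := by
  rw [altPolylog, ← tsum_div_const]
  refine tsum_congr fun k => ?_
  field_simp
  ring

lemma one_div_one_add_eq_tsum {s : ℝ} (hs : |s| < 1) :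
    1 / (1 + s) = ∑' k : ℕ, (-1) ^ k / ((k : ℝ) + 1) ^ 0 * s ^ k := by
  simp only [pow_zero, div_one, ← mul_pow, neg_one_mul]
  rw [tsum_geometric_of_abs_lt_one (by rwa [abs_neg]), sub_neg_eq_add, one_div]

theorem triIter_succ_eq_altPolylog (m : ℕ) {t : ℝ} (ht0 : 0 ≤ t) (ht1 : t < 1) :
    triIter (m + 1) t = altPolylog (m + 1) t := by
  induction m generalizing t with
  | zero =>
    rw [triIter, ← integral_tsum_eq_altPolylog_succ 0 ht0
      (summable_pow_succ_div_succ_pow _ ht0 ht1)]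
    refine intervalIntegral.integral_congr_Ioo_of_le ht0 fun s hs => ?_
    exact one_div_one_add_eq_tsum (by rw [abs_of_pos hs.1]; linarith [hs.2])
  | succ m ih =>
    rw [triIter, ← integral_tsum_eq_altPolylog_succ (m + 1) ht0
      (summable_pow_succ_div_succ_pow _ ht0 ht1)]
    refine intervalIntegral.integral_congr_Ioo_of_le ht0 fun s hs => ?_
    rw [ih hs.1.le (hs.2.trans ht1), altPolylog_div_self _ hs.1.ne']

theorem altPolylog_one {n : ℕ} (hn : 2 ≤ n) :
    altPolylog n 1 = (1 - 2 / 2 ^ n) * ∑' k : ℕ, 1 / ((k : ℝ) + 1) ^ n := by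
  set g : ℕ → ℝ := fun k => 1 / ((k : ℝ) + 1) ^ n
  have hζ : Summable g := summable_one_div_succ_pow hn
  have hη : Summable fun k : ℕ => (-1 : ℝ) ^ k * 1 ^ (k + 1) / ((k : ℝ) + 1) ^ n :=
    hζ.of_norm_bounded fun k => by simp [g, abs_of_pos (by positivity : (0 : ℝ) < k + 1)]
  set d : ℕ → ℝ := fun k => g k - (-1) ^ k * 1 ^ (k + 1) / ((k : ℝ) + 1) ^ n
  -- Only the odd-indexed terms of `ζ - η` survive, and `g (2k+1) = g k / 2^n`.
  have hd_even (k : ℕ) : d (2 * k) = 0 := by simp [d, g, (even_two_mul k).neg_one_pow]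
  have hd_odd (k : ℕ) : d (2 * k + 1) = 2 / 2 ^ n * g k := by
    simp only [d, g, (odd_two_mul_add_one k).neg_one_pow]
    rw [show ((2 * k + 1 : ℕ) : ℝ) + 1 = 2 * ((k : ℝ) + 1) by push_cast; ring, mul_pow]
    field_simp
    ring
  have hd : ∑' k, d k = 2 / 2 ^ n * ∑' k, g k := by
    rw [← tsum_even_add_odd (by simp only [hd_even]; exact summable_zero)
      (by simp only [hd_odd]; exact hζ.mul_left _)]
    simp only [hd_even, hd_odd, tsum_zero, tsum_mul_left, zero_add]
  rw [hζ.tsum_sub hη] at hd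
  rw [altPolylog]
  linear_combination -hd

/-- The normalizing constant of the invariant measure of the n-dimensional triangle map:
`∫₀¹ ∫₀^{x₁} ⋯ ∫₀^{x_{n-1}} 1/(x₁⋯x_{n-1}(1+x_n)) = ((2^{n-1}−1)/2^{n-1})·ζ(n)`. -/
theorem stmt4 (n : ℕ) (hn : 2 ≤ n) :
    (∫ t in (0 : ℝ)..1, triIter (n - 1) t / t)
      = (((2 : ℝ) ^ (n - 1) - 1) / (2 : ℝ) ^ (n - 1)) * ∑' k : ℕ, 1 / ((k : ℝ) + 1) ^ n := by
  obtain ⟨m, rfl⟩ : ∃ m, n = m + 2 := ⟨n - 2, by omega⟩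
  have hsum : Summable fun k : ℕ => (1 : ℝ) ^ (k + 1) / ((k : ℝ) + 1) ^ (m + 2) := by
    simpa only [one_pow] using summable_one_div_succ_pow hn
  rw [show m + 2 - 1 = m + 1 from rfl]
  calc ∫ t in (0 : ℝ)..1, triIter (m + 1) t / t
      = ∫ t in (0 : ℝ)..1, ∑' k : ℕ, (-1) ^ k / ((k : ℝ) + 1) ^ (m + 1) * t ^ k :=
        intervalIntegral.integral_congr_Ioo_of_le zero_le_one fun t ht => by
          rw [triIter_succ_eq_altPolylog m ht.1.le ht.2, altPolylog_div_self _ ht.1.ne']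
    _ = altPolylog (m + 2) 1 := integral_tsum_eq_altPolylog_succ (m + 1) zero_le_one hsum
    _ = _ := by
      rw [altPolylog_one hn, pow_succ 2 (m + 1)]
      field_simp
end

section
/- Let T: Δ → Δ be the n-dimensional triangle map defined on Δ = {(x₁,…,x_n) : 1 ≥ x₁ ≥ ⋯ ≥ x_n > 0} by T(x) = (x₂/x₁, …, x_n/x₁, (1 − x₁ − b·x_n)/x₁) where b = ⌊(1 − x₁)/x_n⌋. Then the function f(x₁,…,x_n) = 1/(x₁·x₂·⋯·x_{n-1}·(1+x_n)) is a fixed point of the transfer operator: for all x in the interior of Δ, ∑_{k=0}^∞ (1/(1 + k·x_{n-1} + x_n)^{n+1}) · f(1/(1 + k·x_{n-1} + x_n), x₁/(1 + k·x_{n-1} + x_n), …, x_{n-1}/(1 + k·x_{n-1} + x_n)) = f(x₁,…,x_n). -/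
/-!
Substituting the preimage into the density, the `k`-th term becomes
`1 / (x₁ ⋯ x_{n-2}) · 1 / (d_k d_{k+1})` with `d_k = 1 + x_n + k x_{n-1}`. Since `d_k` is an
arithmetic progression of step `x_{n-1}`, the series telescopes:
`1 / (d_k d_{k+1}) = (1 / d_k - 1 / d_{k+1}) / x_{n-1}` sums to `1 / (x_{n-1} d_0)`.
-/
open Finset Filter Topology

theorem lt_apply_of_succ_lt_of_lt_apply {α : Type*} [Preorder α] {x : ℕ → α} {n : ℕ} {a : α}
    (hdec : ∀ i, 1 ≤ i → i < n → x (i + 1) < x i) (hxn : a < x n) {i : ℕ} (hi₁ : 1 ≤ i)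
    (hin : i ≤ n) : a < x i :=
  Nat.decreasingInduction (motive := fun i _ => 1 ≤ i → a < x i)
    (fun k hk ih hk₁ => (ih (by omega)).trans (hdec k hk₁ hk)) (fun _ => hxn) hin hi₁

theorem hasSum_sub_succ_of_antitone {u : ℕ → ℝ} {l : ℝ} (hu : Antitone u)
    (hlim : Tendsto u atTop (𝓝 l)) : HasSum (fun k => u k - u (k + 1)) (u 0 - l) := by
  rw [hasSum_iff_tendsto_nat_of_nonneg fun k => sub_nonneg.2 (hu k.le_succ)]
  simpa only [sum_range_sub'] using hlim.const_sub (u 0)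

theorem hasSum_one_div_mul_add_mul {a c : ℝ} (ha : 0 < a) (hc : 0 < c) :
    HasSum (fun k : ℕ => 1 / ((c + k * a) * (c + k * a + a))) (1 / (a * c)) := by
  set u : ℕ → ℝ := fun k => 1 / (c + k * a)
  have hpos (k : ℕ) : 0 < c + k * a := by positivity
  have hanti : Antitone u := antitone_nat_of_succ_le fun k => by
    simp only [u, Nat.cast_succ]
    gcongr
    linarith
  have hlim : Tendsto u atTop (𝓝 0) := by
    simpa only [u, one_div, Pi.inv_def] using
      (tendsto_atTop_add_const_left _ c
        (tendsto_natCast_atTop_atTop.atTop_mul_const ha)).inv_tendsto_atTop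
  have hterm (k : ℕ) : 1 / ((c + k * a) * (c + k * a + a)) = a⁻¹ * (u k - u (k + 1)) := by
    have := hpos k
    simp only [u, Nat.cast_succ]
    field_simp
    ring
  have hsum : 1 / (a * c) = a⁻¹ * (u 0 - 0) := by
    simp only [u, Nat.cast_zero, zero_mul, add_zero, sub_zero]
    ring
  rw [funext hterm, hsum]
  exact (hasSum_sub_succ_of_antitone hanti hlim).mul_left a⁻¹

theorem prod_Icc_ite_one_div {K : Type*} [Field K] (x : ℕ → K) (d : K) (m : ℕ) :
    ∏ i ∈ Icc 1 m, (if i = 1 then 1 / d else x (i - 1) / d) =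
      (∏ i ∈ Icc 1 (m - 1), x i) / d ^ m := by
  induction m with
  | zero => simp
  | succ m ih =>
    rw [prod_Icc_succ_top (by omega), ih]
    rcases m with _ | m
    · simp
    · rw [if_neg (by omega), Nat.add_sub_cancel, Nat.add_sub_cancel, prod_Icc_succ_top (by omega)]
      ring

theorem one_div_pow_mul_one_div_div_pow {K : Type*} [Field K] {P a d : K} (m : ℕ) (hP : P ≠ 0)
    (hd : d ≠ 0) (hda : d + a ≠ 0) :
    1 / d ^ (m + 2) * (1 / (P / d ^ m * (1 + a / d))) = 1 / P * (1 / (d * (d + a))) := by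
  field_simp
  ring

theorem stmt7_general (n : ℕ) (hn : 2 ≤ n) (x : ℕ → ℝ)
    (hxn : 0 < x n)
    (hdec : ∀ i, 1 ≤ i → i < n → x (i + 1) < x i) :
    ∑' k : ℕ,
      (1 / (1 + (k : ℝ) * x (n - 1) + x n) ^ (n + 1)) *
        (1 / ((∏ i ∈ Finset.Icc 1 (n - 1),
            (if i = 1 then 1 / (1 + (k : ℝ) * x (n - 1) + x n)
             else x (i - 1) / (1 + (k : ℝ) * x (n - 1) + x n))) *
          (1 + x (n - 1) / (1 + (k : ℝ) * x (n - 1) + x n))))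
      = 1 / ((∏ i ∈ Finset.Icc 1 (n - 1), x i) * (1 + x n)) := by
  have hpos {i : ℕ} (hi₁ : 1 ≤ i) (hin : i ≤ n) : 0 < x i :=
    lt_apply_of_succ_lt_of_lt_apply hdec hxn hi₁ hin
  have ha : 0 < x (n - 1) := hpos (by omega) (by omega)
  have hc : 0 < 1 + x n := by linarith
  have hP : 0 < ∏ i ∈ Icc 1 (n - 1 - 1), x i :=
    prod_pos fun i hi => by
      obtain ⟨hi₁, hin⟩ := mem_Icc.1 hi
      exact hpos hi₁ (by omega)
  have hd (k : ℕ) : 1 + k * x (n - 1) + x n = (1 + x n) + k * x (n - 1) := by ring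
  simp_rw [prod_Icc_ite_one_div, show n + 1 = n - 1 + 2 by omega, hd]
  rw [tsum_congr fun k => one_div_pow_mul_one_div_div_pow (n - 1) hP.ne' (by positivity)
    (by positivity), tsum_mul_left, (hasSum_one_div_mul_add_mul ha hc).tsum_eq,
    ← Nat.sub_add_cancel (show 1 ≤ n - 1 by omega), prod_Icc_succ_top (by omega),
    Nat.sub_add_cancel (show 1 ≤ n - 1 by omega), one_div_mul_one_div, mul_assoc]

/-- The invariant density `f(x) = 1/(x₁⋯x_{n-1}(1+x_n))` is a fixed point of the transfer
operator of the n-dimensional triangle map, summing over the preimages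
`(1/d_k, x₁/d_k, …, x_{n-1}/d_k)` with `d_k = 1 + k·x_{n-1} + x_n` and Jacobian `1/d_k^{n+1}`. -/
theorem stmt7 (n : ℕ) (hn : 2 ≤ n) (x : ℕ → ℝ)
    (hx1 : x 1 < 1) (hxn : 0 < x n)
    (hdec : ∀ i, 1 ≤ i → i < n → x (i + 1) < x i) :
    ∑' k : ℕ,
      (1 / (1 + (k : ℝ) * x (n - 1) + x n) ^ (n + 1)) *
        (1 / ((∏ i ∈ Finset.Icc 1 (n - 1),
            (if i = 1 then 1 / (1 + (k : ℝ) * x (n - 1) + x n)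
             else x (i - 1) / (1 + (k : ℝ) * x (n - 1) + x n))) *
          (1 + x (n - 1) / (1 + (k : ℝ) * x (n - 1) + x n))))
      = 1 / ((∏ i ∈ Finset.Icc 1 (n - 1), x i) * (1 + x n)) :=
  stmt7_general n hn x hxn hdec
end

section
/- Let t: Δ → Δ be the slow triangle map with two inverse branches t₀⁻¹(x) = (1/(1+x_n), x₁/(1+x_n), …, x_{n-1}/(1+x_n)) and t₁⁻¹(x) = (x₁/(1+x_n), …, x_n/(1+x_n)). Then f(x₁,…,x_n) = 1/(x₁·x₂·⋯·x_n) satisfies the transfer operator equation: (1/(1+x_n)^{n+1})·[f(t₀⁻¹(x)) + f(t₁⁻¹(x))] = f(x) for all x with 0 < x_n ≤ ⋯ ≤ x₁ ≤ 1. -/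
/-- The density `f(x) = 1/(x₁⋯x_n)` satisfies the transfer operator equation of the slow
triangle map, whose two inverse branches are
`t₀⁻¹(x) = (1/(1+x_n), x₁/(1+x_n), …, x_{n-1}/(1+x_n))` and
`t₁⁻¹(x) = (x₁/(1+x_n), …, x_n/(1+x_n))`, each with Jacobian factor `1/(1+x_n)^{n+1}`. -/
theorem stmt9 (n : ℕ) (hn : 1 ≤ n) (x : ℕ → ℝ)
    (hxn : 0 < x n) (hx1 : x 1 ≤ 1)
    (hchain : ∀ i, 1 ≤ i → i < n → x (i + 1) ≤ x i) :
    (1 / (1 + x n) ^ (n + 1)) *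
      ((1 / ∏ i ∈ Finset.Icc 1 n,
          (if i = 1 then 1 / (1 + x n) else x (i - 1) / (1 + x n))) +
       (1 / ∏ i ∈ Finset.Icc 1 n, x i / (1 + x n)))
      = 1 / ∏ i ∈ Finset.Icc 1 n, x i := by
  obtain ⟨m, rfl⟩ : ∃ m, n = m + 1 := ⟨n - 1, (Nat.succ_pred_eq_of_pos hn).symm⟩
  set A : ℝ := 1 + x (m + 1) with hAdef
  have hA : (0:ℝ) < A := by positivity
  have key : ∀ j, 1 ≤ j → j ≤ m + 1 → x (m + 1) ≤ x j := by
    intro j h1 h2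
    have claim : ∀ k, j ≤ k → k ≤ m + 1 → x k ≤ x j := by
      intro k hk
      induction k, hk using Nat.le_induction with
      | base => intro _; exact le_rfl
      | succ k hjk ih =>
        intro hkn
        have h1k : 1 ≤ k := le_trans h1 hjk
        have hkn' : k < m + 1 := Nat.lt_of_succ_le hkn
        exact le_trans (hchain k h1k hkn') (ih (le_of_lt hkn'))
    exact claim (m + 1) h2 le_rfl
  have hpos : ∀ i ∈ Finset.Icc 1 (m + 1), 0 < x i := by
    intro i hi
    rw [Finset.mem_Icc] at hi
    exact lt_of_lt_of_le hxn (key i hi.1 hi.2)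
  -- second product
  have hprod2 : (∏ i ∈ Finset.Icc 1 (m + 1), x i / A)
      = (∏ i ∈ Finset.Icc 1 (m + 1), x i) / A ^ (m + 1) := by
    rw [Finset.prod_div_distrib, Finset.prod_const, Nat.card_Icc]
    norm_num
  -- first product
  have hsplit : Finset.Icc 1 (m + 1) = insert 1 (Finset.Icc 2 (m + 1)) := by
    ext i
    simp only [Finset.mem_Icc, Finset.mem_insert]
    omega
  have hreindex : (∏ i ∈ Finset.Icc 2 (m + 1), x (i - 1))
      = ∏ j ∈ Finset.Icc 1 m, x j := by
    apply Finset.prod_nbij' (fun i => i - 1) (fun j => j + 1)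
    · intro i hi; rw [Finset.mem_Icc] at *; omega
    · intro j hj; rw [Finset.mem_Icc] at *; omega
    · intro i hi; rw [Finset.mem_Icc] at hi; omega
    · intro j hj; rfl
    · intro i hi; rfl
  have hprod1 : (∏ i ∈ Finset.Icc 1 (m + 1),
        (if i = 1 then 1 / A else x (i - 1) / A))
      = (1 / A) * ((∏ j ∈ Finset.Icc 1 m, x j) / A ^ m) := by
    rw [hsplit, Finset.prod_insert (by rw [Finset.mem_Icc]; omega)]
    simp only [if_pos rfl]
    congr 1
    rw [Finset.prod_ite_of_false (by intro i hi; rw [Finset.mem_Icc] at hi; omega),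
      Finset.prod_div_distrib, hreindex, Finset.prod_const, Nat.card_Icc,
      show m + 1 + 1 - 2 = m from rfl]
  have hprodsplit : (∏ i ∈ Finset.Icc 1 (m + 1), x i)
      = (∏ i ∈ Finset.Icc 1 m, x i) * x (m + 1) :=
    Finset.prod_Icc_succ_top (Nat.le_add_left 1 m) x
  have hQpos : 0 < ∏ i ∈ Finset.Icc 1 m, x i := by
    apply Finset.prod_pos
    intro i hi
    apply hpos
    rw [Finset.mem_Icc] at *
    omega
  rw [hprod1, hprod2, hprodsplit]
  have hAne : A ≠ 0 := ne_of_gt hA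
  have hQne : (∏ i ∈ Finset.Icc 1 m, x i) ≠ 0 := ne_of_gt hQpos
  have hxne : x (m + 1) ≠ 0 := ne_of_gt hxn
  field_simp
  ring
end

section
/- Fix n ≥ 1 and k with 0 ≤ k ≤ n. The sum, over compositions C of n+1 whose index in the standard (reverse-lexicographic) order is congruent to 1 modulo 2^{n−k}, of the multinomial coefficient (n+1)!/∏(parts of C)! times (−1)^{(number of parts of C) − 1}, equals (−1)^k · binomial(n, k). -/
/-- `compIdx m i` is the `(i+1)`-st composition of `m+1` in the standard
(reverse-lexicographic / multinomial-tree) order, `0 ≤ i < 2^m`: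
the left child `(k₁+1, k₂, …)` keeps the index, the right child `(1, k₁, k₂, …)`
has index shifted by `2^m`. -/
def compIdx : ℕ → ℕ → List ℕ
  | 0, _ => [1]
  | (m + 1), i =>
    if i < 2 ^ m then
      match compIdx m i with
      | [] => []
      | a :: rest => (a + 1) :: rest
    else 1 :: compIdx m (i - 2 ^ m)

def headInc : List ℕ → List ℕ
  | [] => []
  | a :: rest => (a + 1) :: rest

def addLast (c : ℕ) : List ℕ → List ℕ
  | [] => []
  | [a] => [a + c]
  | a :: b :: rest => a :: addLast c (b :: rest)

lemma compIdx_ne_nil (m i : ℕ) : compIdx m i ≠ [] := by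
  induction m generalizing i with
  | zero => simp [compIdx]
  | succ m ih =>
    rw [compIdx]
    split
    · cases h : compIdx m i with
      | nil => exact absurd h (ih i)
      | cons a rest => simp [h]
    · simp

lemma compIdx_lt {m i : ℕ} (h : i < 2 ^ m) :
    compIdx (m + 1) i = headInc (compIdx m i) := by
  rw [compIdx, if_pos h]
  cases h' : compIdx m i with
  | nil => exact absurd h' (compIdx_ne_nil m i)
  | cons a rest => simp [headInc]

lemma compIdx_ge {m i : ℕ} (h : ¬ i < 2 ^ m) :
    compIdx (m + 1) i = 1 :: compIdx m (i - 2 ^ m) := by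
  rw [compIdx, if_neg h]

lemma compIdx_sum {m i : ℕ} (h : i < 2 ^ m) : (compIdx m i).sum = m + 1 := by
  induction m generalizing i with
  | zero => simp [compIdx]
  | succ m ih =>
    by_cases h' : i < 2 ^ m
    · rw [compIdx_lt h']
      cases hc : compIdx m i with
      | nil => exact absurd hc (compIdx_ne_nil m i)
      | cons a rest =>
        have := ih h'
        rw [hc] at this
        simp [headInc] at this ⊢
        omega
    · rw [compIdx_ge h']
      have h2 : i - 2 ^ m < 2 ^ m := by
        have : 2 ^ (m + 1) = 2 ^ m + 2 ^ m := by ring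
        omega
      simp [ih h2]; omega

lemma addLast_zero (l : List ℕ) : addLast 0 l = l := by
  induction l with
  | nil => rfl
  | cons a rest ih =>
    cases rest with
    | nil => rfl
    | cons b r => rw [addLast, ih]

lemma addLast_cons (c a : ℕ) {l : List ℕ} (h : l ≠ []) :
    addLast c (a :: l) = a :: addLast c l := by
  cases l with
  | nil => exact absurd rfl h
  | cons b r => rfl

lemma addLast_ne_nil (c : ℕ) {l : List ℕ} (h : l ≠ []) : addLast c l ≠ [] := by
  cases l with
  | nil => exact absurd rfl h
  | cons a r => cases r <;> simp [addLast]

lemma addLast_addLast (c d : ℕ) (l : List ℕ) :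
    addLast c (addLast d l) = addLast (d + c) l := by
  induction l with
  | nil => rfl
  | cons a rest ih =>
    cases rest with
    | nil => simp [addLast]; ring
    | cons b r =>
      rw [addLast_cons d a (l := b :: r) (by simp),
        addLast_cons c a (addLast_ne_nil d (l := b :: r) (by simp)),
        addLast_cons (d + c) a (l := b :: r) (by simp), ih]

lemma addLast_append (c b : ℕ) (l : List ℕ) :
    addLast c (l ++ [b]) = l ++ [b + c] := by
  induction l with
  | nil => rfl
  | cons a rest ih =>
    cases rest with
    | nil => rfl
    | cons x r => simpa [addLast] using ih

lemma headInc_addLast (c : ℕ) (l : List ℕ) (h : l ≠ []) :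
    headInc (addLast c l) = addLast c (headInc l) := by
  cases l with
  | nil => exact absurd rfl h
  | cons a rest =>
    cases rest with
    | nil => simp [addLast, headInc]; ring
    | cons b r => rfl

lemma headInc_append (l : List ℕ) (b : ℕ) (h : l ≠ []) :
    headInc (l ++ [b]) = headInc l ++ [b] := by
  cases l with
  | nil => exact absurd rfl h
  | cons a rest => rfl

lemma compIdx_two_mul {m i : ℕ} (h : i < 2 ^ m) :
    compIdx (m + 1) (2 * i) = addLast 1 (compIdx m i) := by
  induction m generalizing i with
  | zero =>
    interval_cases i
    rfl
  | succ m ih =>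
    by_cases h' : i < 2 ^ m
    · have h2 : 2 * i < 2 ^ (m + 1) := by
        have : 2 ^ (m + 1) = 2 * 2 ^ m := by ring
        omega
      rw [compIdx_lt h2, compIdx_lt h', ih h',
        headInc_addLast _ _ (compIdx_ne_nil m i)]
    · have h2 : ¬ 2 * i < 2 ^ (m + 1) := by
        have : 2 ^ (m + 1) = 2 * 2 ^ m := by ring
        omega
      have h3 : i - 2 ^ m < 2 ^ m := by
        have : 2 ^ (m + 1) = 2 ^ m + 2 ^ m := by ring
        omega
      rw [compIdx_ge h2, compIdx_ge h']
      have : 2 * i - 2 ^ (m + 1) = 2 * (i - 2 ^ m) := by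
        have : 2 ^ (m + 1) = 2 * 2 ^ m := by ring
        omega
      rw [this, ih h3]
      cases hc : compIdx m (i - 2 ^ m) with
      | nil => exact absurd hc (compIdx_ne_nil _ _)
      | cons a rest => rfl

lemma compIdx_two_mul_add_one {m i : ℕ} (h : i < 2 ^ m) :
    compIdx (m + 1) (2 * i + 1) = compIdx m i ++ [1] := by
  induction m generalizing i with
  | zero =>
    interval_cases i
    rfl
  | succ m ih =>
    by_cases h' : i < 2 ^ m
    · have h2 : 2 * i + 1 < 2 ^ (m + 1) := by
        have : 2 ^ (m + 1) = 2 * 2 ^ m := by ring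
        omega
      rw [compIdx_lt h2, compIdx_lt h', ih h',
        headInc_append _ _ (compIdx_ne_nil m i)]
    · have h2 : ¬ 2 * i + 1 < 2 ^ (m + 1) := by
        have : 2 ^ (m + 1) = 2 * 2 ^ m := by ring
        omega
      have h3 : i - 2 ^ m < 2 ^ m := by
        have : 2 ^ (m + 1) = 2 ^ m + 2 ^ m := by ring
        omega
      rw [compIdx_ge h2, compIdx_ge h']
      have : 2 * i + 1 - 2 ^ (m + 1) = 2 * (i - 2 ^ m) + 1 := by
        have : 2 ^ (m + 1) = 2 * 2 ^ m := by ring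
        omega
      rw [this, ih h3]
      rfl

lemma compIdx_pow_mul {d m j : ℕ} (hd : d ≤ m) (hj : j < 2 ^ (m - d)) :
    compIdx m (2 ^ d * j) = addLast d (compIdx (m - d) j) := by
  induction d generalizing m with
  | zero => simp [addLast_zero]
  | succ d ih =>
    obtain ⟨m, rfl⟩ : ∃ m', m = m' + 1 := ⟨m - 1, by omega⟩
    have hd' : d ≤ m := by omega
    have hj' : j < 2 ^ (m - d) := by
      have : m + 1 - (d + 1) = m - d := by omega
      rwa [this] at hj
    have hlt : 2 ^ d * j < 2 ^ m := by
      calc 2 ^ d * j < 2 ^ d * 2 ^ (m - d) := by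
            exact (Nat.mul_lt_mul_left (by positivity)).2 hj'
        _ = 2 ^ m := by rw [← pow_add]; congr 1; omega
    have : 2 ^ (d + 1) * j = 2 * (2 ^ d * j) := by ring
    rw [this, compIdx_two_mul hlt, ih hd' hj', addLast_addLast]
    congr 2
    omega

def qq (l : List ℕ) : ℕ := l.sum.factorial / (l.map Nat.factorial).prod

def W (l : List ℕ) : ℤ := (qq l : ℤ) * (-1) ^ (l.length - 1)

lemma prod_factorial_dvd (l : List ℕ) : (l.map Nat.factorial).prod ∣ l.sum.factorial := by
  induction l with
  | nil => simp
  | cons a rest ih =>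
    simp only [List.map_cons, List.prod_cons, List.sum_cons]
    calc a.factorial * (rest.map Nat.factorial).prod
        ∣ a.factorial * rest.sum.factorial := mul_dvd_mul_left _ ih
      _ ∣ (a + rest.sum).factorial := Nat.factorial_mul_factorial_dvd_factorial_add _ _

lemma prod_factorial_pos (l : List ℕ) : 0 < (l.map Nat.factorial).prod := by
  apply List.prod_pos
  intro x hx
  simp only [List.mem_map] at hx
  obtain ⟨a, _, rfl⟩ := hx
  exact a.factorial_pos

lemma qq_append (l : List ℕ) (b : ℕ) :
    qq (l ++ [b]) = (l.sum + b).choose b * qq l := by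
  unfold qq
  rw [List.sum_append, List.map_append, List.prod_append]
  simp only [List.sum_cons, List.sum_nil, List.map_cons, List.map_nil,
    List.prod_cons, List.prod_nil, add_zero, mul_one]
  have hd := prod_factorial_dvd l
  have hpos := prod_factorial_pos l
  obtain ⟨q, hq⟩ := hd
  rw [hq, Nat.mul_div_cancel_left _ hpos]
  have key : (l.sum + b).factorial = (l.sum + b).choose b * q * ((l.map Nat.factorial).prod * b.factorial) := by
    have h1 : (l.sum + b).choose b * b.factorial * l.sum.factorial = (l.sum + b).factorial := by
      have := Nat.choose_mul_factorial_mul_factorial (Nat.le_add_left b l.sum)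
      simpa [Nat.add_sub_cancel] using this
    rw [← h1, hq]
    ring
  rw [key, Nat.mul_div_cancel _ (by positivity)]

lemma qq_singleton (a : ℕ) : qq [a] = 1 := by
  simp [qq, Nat.div_self (Nat.factorial_pos a)]

def G (m c : ℕ) : ℤ := ∑ j ∈ Finset.range (2 ^ m), W (addLast c (compIdx m j))

lemma sum_range_two_mul {M : Type*} [AddCommMonoid M] (n : ℕ) (f : ℕ → M) :
    ∑ i ∈ Finset.range (2 * n), f i
      = ∑ i ∈ Finset.range n, f (2 * i) + ∑ i ∈ Finset.range n, f (2 * i + 1) := by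
  induction n with
  | zero => simp
  | succ n ih =>
    have : 2 * (n + 1) = (2 * n + 1) + 1 := by ring
    rw [this, Finset.sum_range_succ, Finset.sum_range_succ,
      Finset.sum_range_succ (fun i => f (2 * i)), Finset.sum_range_succ (fun i => f (2 * i + 1)), ih]
    abel

lemma compIdx_length_pos (m i : ℕ) : 0 < (compIdx m i).length :=
  List.length_pos_iff.2 (compIdx_ne_nil m i)

lemma G_eq (m c : ℕ) : G m c = (-1) ^ m * ((m + c).choose c : ℤ) := by
  induction m generalizing c with
  | zero => simp [G, compIdx, addLast, W, qq_singleton]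
  | succ m ih =>
    have h2 : 2 ^ (m + 1) = 2 * 2 ^ m := by ring
    rw [G, h2, sum_range_two_mul]
    have heven : ∀ j ∈ Finset.range (2 ^ m),
        W (addLast c (compIdx (m + 1) (2 * j))) = W (addLast (c + 1) (compIdx m j)) := by
      intro j hj
      rw [compIdx_two_mul (Finset.mem_range.1 hj), addLast_addLast, add_comm 1 c]
    have hodd : ∀ j ∈ Finset.range (2 ^ m),
        W (addLast c (compIdx (m + 1) (2 * j + 1)))
          = -(((m + c + 2).choose (c + 1) : ℤ)) * W (addLast 0 (compIdx m j)) := by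
      intro j hj
      have hjm := Finset.mem_range.1 hj
      rw [compIdx_two_mul_add_one hjm, addLast_append, addLast_zero]
      unfold W
      rw [qq_append, compIdx_sum hjm]
      have hlen : (compIdx m j ++ [1 + c]).length - 1 = (compIdx m j).length := by simp
      rw [hlen]
      have hl := compIdx_length_pos m j
      have : ((-1 : ℤ)) ^ (compIdx m j).length
          = -((-1 : ℤ) ^ ((compIdx m j).length - 1)) := by
        obtain ⟨t, ht⟩ : ∃ t, (compIdx m j).length = t + 1 := ⟨_, (Nat.succ_pred_eq_of_pos hl).symm⟩
        rw [ht, pow_succ, Nat.add_sub_cancel]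
        ring
      rw [this]
      have hch : m + 1 + (1 + c) = m + c + 2 := by ring
      have hch2 : (1 + c) = c + 1 := by ring
      rw [hch, hch2]
      push_cast
      ring
    rw [Finset.sum_congr rfl heven, Finset.sum_congr rfl hodd, ← Finset.mul_sum]
    rw [show (∑ j ∈ Finset.range (2 ^ m), W (addLast (c+1) (compIdx m j))) = G m (c+1) from rfl]
    rw [show (∑ j ∈ Finset.range (2 ^ m), W (addLast 0 (compIdx m j))) = G m 0 from rfl]
    rw [ih, ih]
    have hpascal2 := True.intro
    have hpascal : ((m + c + 2).choose (c + 1) : ℤ)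
        = ((m + c + 1).choose c : ℤ) + ((m + c + 1).choose (c + 1) : ℤ) := by
      have := Nat.choose_succ_succ (m + c + 1) c
      push_cast [this]
      norm_num
    simp only [Nat.choose_zero_right, Nat.add_zero, Nat.cast_one, mul_one]
    have e1 : m + (c + 1) = m + c + 1 := by ring
    have e2 : m + 1 + c = m + c + 1 := by ring
    rw [e1, e2, hpascal, pow_succ]
    ring

/-- Signed multinomial tree identity: summing over the compositions of `n+1` whose
(1-based) index in the standard order is `≡ 1 (mod 2^{n−k})`, the signed multinomial
coefficients add up to `(−1)^k · C(n,k)`. -/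
theorem stmt11 (n k : ℕ) (hn : 1 ≤ n) (hk : k ≤ n) :
    ∑ i ∈ (Finset.range (2 ^ n)).filter (fun i => i % 2 ^ (n - k) = 0),
        (((n + 1).factorial / ((compIdx n i).map Nat.factorial).prod : ℕ) : ℤ) *
          (-1) ^ ((compIdx n i).length - 1)
      = (-1) ^ k * (n.choose k : ℤ) := by
  set d := n - k with hd
  have hdn : d ≤ n := Nat.sub_le _ _
  have hkd : n - d = k := by omega
  have himg : (Finset.range (2 ^ n)).filter (fun i => i % 2 ^ d = 0)
      = (Finset.range (2 ^ k)).image (fun j => 2 ^ d * j) := by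
    ext i
    simp only [Finset.mem_filter, Finset.mem_range, Finset.mem_image]
    constructor
    · rintro ⟨hi, hmod⟩
      refine ⟨i / 2 ^ d, ?_, ?_⟩
      · have hdvd : 2 ^ d ∣ i := Nat.dvd_of_mod_eq_zero hmod
        have : i / 2 ^ d * 2 ^ d = i := Nat.div_mul_cancel hdvd
        by_contra hcon
        push_neg at hcon
        have : 2 ^ k * 2 ^ d ≤ (i / 2 ^ d) * 2 ^ d :=
          Nat.mul_le_mul_right _ hcon
        rw [← pow_add] at this
        have hkd2 : k + d = n := by omega
        rw [hkd2] at this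
        omega
      · rw [mul_comm]
        exact Nat.div_mul_cancel (Nat.dvd_of_mod_eq_zero hmod)
    · rintro ⟨j, hj, rfl⟩
      constructor
      · calc 2 ^ d * j < 2 ^ d * 2 ^ k := (Nat.mul_lt_mul_left (by positivity)).2 hj
          _ = 2 ^ n := by rw [← pow_add]; congr 1; omega
      · simp [Nat.mul_mod_right]
  rw [himg, Finset.sum_image (by
    intro a _ b _ hab
    exact Nat.eq_of_mul_eq_mul_left (by positivity) hab)]
  have hterm : ∀ j ∈ Finset.range (2 ^ k),
      (((n + 1).factorial / ((compIdx n (2 ^ d * j)).map Nat.factorial).prod : ℕ) : ℤ) *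
          (-1) ^ ((compIdx n (2 ^ d * j)).length - 1)
        = W (addLast d (compIdx k j)) := by
    intro j hj
    have hjk := Finset.mem_range.1 hj
    have hlt : 2 ^ d * j < 2 ^ n := by
      calc 2 ^ d * j < 2 ^ d * 2 ^ k := (Nat.mul_lt_mul_left (by positivity)).2 hjk
        _ = 2 ^ n := by rw [← pow_add]; congr 1; omega
    have hc : compIdx n (2 ^ d * j) = addLast d (compIdx k j) := by
      rw [compIdx_pow_mul hdn (by rw [hkd]; exact hjk)]
      rw [hkd]
    rw [← hc]
    unfold W qq
    rw [compIdx_sum hlt]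
  rw [Finset.sum_congr rfl hterm]
  have : (∑ j ∈ Finset.range (2 ^ k), W (addLast d (compIdx k j))) = G k d := rfl
  rw [this, G_eq]
  congr 2
  rw [hd]
  have : k + (n - k) = n := by omega
  rw [this]
  exact Nat.choose_symm hk
end

section
/- The sum over all compositions C of a positive integer m of (m!/∏(parts of C)!)·(−1)^{(number of parts of C)−1} equals (−1)^{m−1}. -/
/-!
Let `S m = signedMultinomialSum m` be the sum over compositions of `m` of the multinomial
coefficient times `(-1) ^ (number of parts)`. Splitting off the first block of a composition of
`n + 1`, of size `n + 1 - j`, gives `S (n + 1) = -∑_{j ≤ n} (n+1 choose j) S j`, and since the full alternating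
sum of binomial coefficients vanishes, `S m = (-1) ^ m` follows by strong induction.
-/

open Finset

theorem neg_one_pow_sub_one {R : Type*} [Ring R] {k : ℕ} (hk : 0 < k) :
    (-1 : R) ^ (k - 1) = -(-1) ^ k := by
  obtain ⟨k, rfl⟩ := Nat.exists_eq_add_of_le' hk
  simp [pow_succ]

theorem List.multinomial_nil : ([] : List ℕ).multinomial = 1 := by
  simp [List.multinomial, Finsupp.multinomial]

theorem List.prod_map_factorial_mul_multinomial (l : List ℕ) :
    (l.map Nat.factorial).prod * l.multinomial = l.sum.factorial := by
  induction l with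
  | nil => simp [List.multinomial_nil]
  | cons a l ih =>
    rw [List.multinomial_cons, List.map_cons, List.prod_cons, List.sum_cons,
      add_comm a l.sum, ← Nat.add_choose_mul_factorial_mul_factorial, ← ih]
    ring

theorem List.multinomial_eq_factorial_div (l : List ℕ) :
    l.multinomial = l.sum.factorial / (l.map Nat.factorial).prod :=
  (Nat.div_eq_of_eq_mul_left (List.prod_pos fun _ h ↦ by
    obtain ⟨b, -, rfl⟩ := List.mem_map.1 h; exact Nat.factorial_pos b)
    (by rw [mul_comm, List.prod_map_factorial_mul_multinomial])).symm

namespace Composition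

def sigmaEquivSucc (n : ℕ) : (Σ j : Fin (n + 1), Composition j) ≃ Composition (n + 1) where
  toFun p := ⟨(n + 1 - p.1) :: p.2.blocks,
    by
      rintro i (_ | ⟨_, hi⟩)
      · omega
      · exact p.2.blocks_pos hi,
    by simp only [List.sum_cons, p.2.blocks_sum]; omega⟩
  invFun c := ⟨⟨c.blocks.tail.sum, by
      have := c.blocks_sum
      cases hc : c.blocks with
      | nil => simp [hc] at this
      | cons a l =>
        have := c.blocks_pos (hc ▸ List.mem_cons_self)
        simp_all only [List.sum_cons, List.tail_cons]
        omega⟩,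
    ⟨c.blocks.tail, fun hi ↦ c.blocks_pos (List.mem_of_mem_tail hi), rfl⟩⟩
  left_inv := by
    rintro ⟨⟨j, hj⟩, blocks, pos, hsum⟩
    simp only at hsum
    subst hsum
    rfl
  right_inv c := by
    ext1
    have := c.blocks_sum
    cases hc : c.blocks with
    | nil => simp [hc] at this
    | cons a l =>
      simp only [hc, List.sum_cons, List.tail_cons] at this ⊢
      congr 1
      omega

end Composition

def signedMultinomialSum (m : ℕ) : ℤ :=
  ∑ c : Composition m, (c.blocks.multinomial : ℤ) * (-1) ^ c.length

theorem signedMultinomialSum_zero : signedMultinomialSum 0 = 1 := by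
  rw [signedMultinomialSum, Fintype.sum_eq_single (Composition.ones 0) fun c hc ↦
    (hc (Composition.eq_ones_iff_le_length.2 (Nat.zero_le _))).elim]
  simp [Composition.ones, Composition.length, List.multinomial_nil]

theorem signedMultinomialSum_succ (n : ℕ) :
    signedMultinomialSum (n + 1) =
      -∑ j ∈ range (n + 1), ((n + 1).choose j : ℤ) * signedMultinomialSum j := by
  rw [signedMultinomialSum, ← (Composition.sigmaEquivSucc n).sum_comp, ← univ_sigma_univ,
    sum_sigma, ← Fin.sum_univ_eq_sum_range, ← sum_neg_distrib]
  refine sum_congr rfl fun j _ ↦ ?_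
  rw [signedMultinomialSum, mul_sum, ← sum_neg_distrib]
  refine sum_congr rfl fun c _ ↦ ?_
  simp only [Composition.sigmaEquivSucc, Equiv.coe_fn_mk, Composition.length, List.length_cons,
    List.multinomial_cons, c.blocks_sum]
  rw [Nat.sub_add_cancel j.is_lt.le, Nat.choose_symm j.is_lt.le]
  push_cast
  ring

theorem signedMultinomialSum_eq (m : ℕ) : signedMultinomialSum m = (-1) ^ m := by
  induction m using Nat.strong_induction_on with
  | _ m ih =>
  cases m with
  | zero => exact signedMultinomialSum_zero
  | succ n =>
    have alternating := Int.alternating_sum_range_choose_of_ne (n := n + 1) (by omega)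
    rw [sum_range_succ, Nat.choose_self, Nat.cast_one, mul_one] at alternating
    rw [signedMultinomialSum_succ, sum_congr rfl fun j hj ↦ by rw [ih j (mem_range.1 hj)]]
    simp only [mul_comm ((n + 1).choose _ : ℤ)]
    linarith

/-- The sum over all compositions of a positive integer `m` of
`(m!/∏(parts)!)·(−1)^{(#parts)−1}` equals `(−1)^{m−1}`. -/
theorem stmt12 (m : ℕ) (hm : 1 ≤ m) :
    ∑ c : Composition m,
        ((m.factorial / (c.blocks.map Nat.factorial).prod : ℕ) : ℤ) * (-1) ^ (c.length - 1)
      = (-1) ^ (m - 1) := by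
  have hterm (c : Composition m) :
      ((m.factorial / (c.blocks.map Nat.factorial).prod : ℕ) : ℤ) * (-1) ^ (c.length - 1) =
        -((c.blocks.multinomial : ℤ) * (-1) ^ c.length) := by
    rw [List.multinomial_eq_factorial_div, c.blocks_sum,
      neg_one_pow_sub_one (c.length_pos_of_pos hm), mul_neg]
  rw [sum_congr rfl fun c _ ↦ hterm c, sum_neg_distrib, ← signedMultinomialSum,
    signedMultinomialSum_eq, neg_one_pow_sub_one hm]
end

section
/- Let A₀, …, A_n be vectors in ℝ^{n+1} with nonnegative entries and positive ℓ¹ norms, let A = A₁ + ⋯ + A_n, and suppose ‖A₀‖ ≤ ‖A₁‖ ≤ ⋯ ≤ ‖A_n‖. Then ∑_{b=1}^∞ 1/∏_{k=0}^{n-1} ‖D_k(b)‖ ≥ 1/((n−1)·‖A₀‖) · 1/∏_{j=1}^{n-1} ‖j·A₀ + A‖, where D₀(b) = b·A₀ + A_n and D_k(b) = (b+1)·A₀ + A₁ + ⋯ + A_k + A_n for 1 ≤ k ≤ n−1. (Here ‖·‖ is the ℓ¹ norm, additive on nonnegative vectors.) -/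
open Finset Filter Topology

/-- Key lower bound for the series of volumes of the cells
`Δ(b₀,…,b_{m−n}, b, 0, …, 0)` summed over `b ≥ 1`, in terms of the ℓ¹ norms
`‖A₀‖, …, ‖A_n‖` of the vertex vectors (ℓ¹ norm is additive on nonnegative vectors):
`∑_{b≥1} 1/∏_{k<n}‖D_k(b)‖ ≥ 1/((n−1)‖A₀‖) · 1/∏_{j=1}^{n-1}‖jA₀ + A‖`
with `A = A₁+⋯+A_n`, `D₀(b) = bA₀+A_n`, `D_k(b) = (b+1)A₀+A₁+⋯+A_k+A_n`. -/
theorem stmt13 (n : ℕ) (hn : 2 ≤ n) (A : ℕ → Fin (n + 1) → ℝ)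
    (hA : ∀ k ≤ n, ∀ i, 0 ≤ A k i)
    (hpos : ∀ k ≤ n, 0 < ∑ i, |A k i|)
    (hmono : ∀ k, k < n → ∑ i, |A k i| ≤ ∑ i, |A (k + 1) i|) :
    (1 / (((n : ℝ) - 1) * ∑ i, |A 0 i|)) *
      (1 / ∏ j ∈ Finset.Icc 1 (n - 1),
        ∑ i, |(j : ℝ) * A 0 i + ∑ l ∈ Finset.Icc 1 n, A l i|)
    ≤ ∑' b : ℕ,
        1 / ∏ k ∈ Finset.range n,
          ∑ i, |if k = 0 then ((b : ℝ) + 1) * A 0 i + A n i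
                else ((b : ℝ) + 2) * A 0 i + (∑ l ∈ Finset.Icc 1 k, A l i) + A n i| := by
  clear hmono
  set N : ℕ → ℝ := fun l => ∑ i, A l i with hNdef
  have hNnonneg : ∀ l ≤ n, 0 ≤ N l := fun l hl => Finset.sum_nonneg fun i _ => hA l hl i
  have hNeq : ∀ l ≤ n, ∑ i, |A l i| = N l := fun l hl =>
    Finset.sum_congr rfl fun i _ => abs_of_nonneg (hA l hl i)
  have ha : 0 < N 0 := by rw [← hNeq 0 (by omega)]; exact hpos 0 (by omega)
  set a : ℝ := N 0 with hadef
  set S : ℝ := ∑ l ∈ Finset.Icc 1 n, N l with hSdef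
  set s : ℕ → ℝ := fun k => ∑ l ∈ Finset.Icc 1 k, N l with hsdef
  have hS_nonneg : 0 ≤ S := Finset.sum_nonneg fun l hl => hNnonneg l (Finset.mem_Icc.mp hl).2
  have hs_nonneg : ∀ k ≤ n, 0 ≤ s k := fun k hk => Finset.sum_nonneg fun l hl =>
    hNnonneg l (le_trans (Finset.mem_Icc.mp hl).2 hk)
  have hNn : 0 ≤ N n := hNnonneg n le_rfl
  -- linearity of the ℓ¹ norm on nonnegative combinations
  have key : ∀ (x : ℝ), 0 ≤ x → ∀ k ≤ n,
      ∑ i, |x * A 0 i + (∑ l ∈ Finset.Icc 1 k, A l i) + A n i| = x * a + s k + N n := by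
    intro x hx k hk
    have habs : ∀ i : Fin (n+1), |x * A 0 i + (∑ l ∈ Finset.Icc 1 k, A l i) + A n i|
        = x * A 0 i + (∑ l ∈ Finset.Icc 1 k, A l i) + A n i := by
      intro i
      refine abs_of_nonneg ?_
      have h1 : 0 ≤ ∑ l ∈ Finset.Icc 1 k, A l i := Finset.sum_nonneg fun l hl =>
        hA l (le_trans (Finset.mem_Icc.mp hl).2 hk) i
      have h2 := hA 0 (by omega) i
      have h3 := hA n le_rfl i
      positivity
    rw [Finset.sum_congr rfl fun i _ => habs i, Finset.sum_add_distrib, Finset.sum_add_distrib,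
      ← Finset.mul_sum, Finset.sum_comm]
  have key2 : ∀ j : ℕ, ∑ i, |(j : ℝ) * A 0 i + ∑ l ∈ Finset.Icc 1 n, A l i|
      = (j : ℝ) * a + S := by
    intro j
    have habs : ∀ i : Fin (n+1), |(j : ℝ) * A 0 i + ∑ l ∈ Finset.Icc 1 n, A l i|
        = (j : ℝ) * A 0 i + ∑ l ∈ Finset.Icc 1 n, A l i := by
      intro i
      refine abs_of_nonneg ?_
      have h1 : 0 ≤ ∑ l ∈ Finset.Icc 1 n, A l i := Finset.sum_nonneg fun l hl =>
        hA l (Finset.mem_Icc.mp hl).2 i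
      have h2 := hA 0 (by omega) i
      positivity
    rw [Finset.sum_congr rfl fun i _ => habs i, Finset.sum_add_distrib,
      ← Finset.mul_sum, Finset.sum_comm]
  -- the factors of the product in the series
  set T : ℕ → ℕ → ℝ := fun b k =>
    if k = 0 then ((b : ℝ) + 1) * a + N n else ((b : ℝ) + 2) * a + s k + N n with hTdef
  have factor_eq : ∀ (b : ℕ) (k : ℕ), k < n →
      (∑ i, |if k = 0 then ((b : ℝ) + 1) * A 0 i + A n i
            else ((b : ℝ) + 2) * A 0 i + (∑ l ∈ Finset.Icc 1 k, A l i) + A n i|) = T b k := by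
    intro b k hk
    rcases eq_or_ne k 0 with rfl | hk0
    · have h0 : (Finset.Icc 1 0 : Finset ℕ) = ∅ := by simp
      have hx := key ((b : ℝ) + 1) (by positivity) 0 (by omega)
      rw [h0] at hx
      have hs0 : s 0 = 0 := by simp [hsdef]
      rw [hs0, add_zero] at hx
      simp only [hTdef, if_pos rfl]
      simpa [h0] using hx
    · simp only [hTdef, if_neg hk0]
      exact key ((b : ℝ) + 2) (by positivity) k (le_of_lt hk)
  have hT_pos : ∀ (b k : ℕ), k < n → 0 < T b k := by
    intro b k hk
    rcases eq_or_ne k 0 with rfl | hk0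
    · simp only [hTdef, if_pos rfl]
      have : 0 < ((b : ℝ) + 1) * a := by positivity
      linarith
    · simp only [hTdef, if_neg hk0]
      have h1 : 0 < ((b : ℝ) + 2) * a := by positivity
      have h2 := hs_nonneg k (le_of_lt hk)
      linarith
  have hT_ge_a : ∀ (b k : ℕ), k < n → a ≤ T b k := by
    intro b k hk
    have hb : (0:ℝ) ≤ (b : ℝ) := Nat.cast_nonneg b
    rcases eq_or_ne k 0 with rfl | hk0
    · simp only [hTdef, if_pos rfl]
      nlinarith
    · simp only [hTdef, if_neg hk0]
      have h2 := hs_nonneg k (le_of_lt hk)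
      nlinarith
  have hT_ge : ∀ (b k : ℕ), k < n → ((b : ℝ) + 1) * a ≤ T b k := by
    intro b k hk
    have hb : (0:ℝ) ≤ (b : ℝ) := Nat.cast_nonneg b
    rcases eq_or_ne k 0 with rfl | hk0
    · simp only [hTdef, if_pos rfl]; linarith
    · simp only [hTdef, if_neg hk0]
      have h2 := hs_nonneg k (le_of_lt hk)
      nlinarith
  -- compare T with the telescoping factors
  have hbound : ∀ (b k : ℕ), k < n → T b k ≤ ((b : ℝ) + 1 + k) * a + S := by
    intro b k hk
    have hb : (0:ℝ) ≤ (b : ℝ) := Nat.cast_nonneg b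
    rcases eq_or_ne k 0 with rfl | hk0
    · simp only [hTdef, if_pos rfl, Nat.cast_zero, add_zero]
      have hns : N n ≤ S := Finset.single_le_sum (f := N)
        (fun l hl => hNnonneg l (Finset.mem_Icc.mp hl).2) (Finset.mem_Icc.mpr ⟨by omega, le_rfl⟩)
      linarith
    · simp only [hTdef, if_neg hk0]
      have hk1 : 1 ≤ k := Nat.one_le_iff_ne_zero.mpr hk0
      have hkc : (1 : ℝ) ≤ (k : ℝ) := by exact_mod_cast hk1
      have hsub : insert n (Finset.Icc 1 k) ⊆ Finset.Icc 1 n := by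
        intro l hl
        rcases Finset.mem_insert.mp hl with rfl | hl
        · exact Finset.mem_Icc.mpr ⟨by omega, le_rfl⟩
        · have := Finset.mem_Icc.mp hl
          exact Finset.mem_Icc.mpr ⟨this.1, le_trans this.2 (le_of_lt hk)⟩
      have hnot : n ∉ Finset.Icc 1 k := by
        intro hmem; have := Finset.mem_Icc.mp hmem; omega
      have hsk : s k + N n ≤ S := by
        have hle := Finset.sum_le_sum_of_subset_of_nonneg hsub
          (fun l hl _ => hNnonneg l (Finset.mem_Icc.mp hl).2)
        rw [Finset.sum_insert hnot] at hle
        simp only [hsdef, hSdef]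
        linarith
      nlinarith
  -- the telescoping series
  set C : ℝ := (((n : ℝ) - 1) * a)⁻¹ with hCdef
  set g : ℕ → ℝ := fun b => (∏ k ∈ Finset.range n, (((b : ℝ) + 1 + k) * a + S))⁻¹ with hgdef
  set h : ℕ → ℝ := fun b => C * (∏ j ∈ Finset.range (n - 1), (((b : ℝ) + 1 + j) * a + S))⁻¹
    with hhdef
  have hn1 : (1 : ℝ) ≤ (n : ℝ) - 1 := by
    have : (2 : ℝ) ≤ (n : ℝ) := by exact_mod_cast hn
    linarith
  have hfac_pos : ∀ (x : ℝ), 1 ≤ x → 0 < x * a + S := by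
    intro x hx
    nlinarith
  have hfacb : ∀ (b j : ℕ), 0 < ((b : ℝ) + 1 + j) * a + S := by
    intro b j
    have h1 : (0:ℝ) ≤ (b : ℝ) := Nat.cast_nonneg b
    have h2 : (0:ℝ) ≤ (j : ℝ) := Nat.cast_nonneg j
    exact hfac_pos _ (by linarith)
  have hprod_pos : ∀ b : ℕ, 0 < ∏ k ∈ Finset.range n, (((b : ℝ) + 1 + k) * a + S) :=
    fun b => Finset.prod_pos fun k _ => hfacb b k
  -- telescoping identity
  have htele : ∀ b : ℕ, h b - h (b + 1) = g b := by
    intro b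
    set P : ℝ := ∏ j ∈ Finset.range (n - 1), (((b : ℝ) + 1 + j) * a + S) with hPdef
    set Q : ℝ := ∏ j ∈ Finset.range (n - 1), (((b : ℝ) + 2 + j) * a + S) with hQdef
    set R : ℝ := ∏ k ∈ Finset.range n, (((b : ℝ) + 1 + k) * a + S) with hRdef
    set x : ℝ := ((b : ℝ) + n) * a + S with hxdef
    set y : ℝ := ((b : ℝ) + 1) * a + S with hydef
    have hb0 : (0:ℝ) ≤ (b : ℝ) := Nat.cast_nonneg b
    have hn2 : (2:ℝ) ≤ (n : ℝ) := by exact_mod_cast hn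
    have hx_pos : 0 < x := by rw [hxdef]; exact hfac_pos _ (by linarith)
    have hy_pos : 0 < y := by rw [hydef]; exact hfac_pos _ (by linarith)
    have hR1 : R = P * x := by
      rw [hRdef, hPdef, hxdef]
      have hnn : n = (n - 1) + 1 := by omega
      rw [hnn, Finset.prod_range_succ]
      congr 2
      have hc : ((n - 1 : ℕ) : ℝ) = (n : ℝ) - 1 := by
        have h1 : (1 : ℕ) ≤ n := by omega
        push_cast [h1]; ring
      rw [hc]
      have : ((n - 1 : ℕ) + 1 : ℕ) = n := by omega
      rw [this]
      ring
    have hR2 : R = y * Q := by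
      rw [hRdef, hQdef, hydef]
      have hnn : n = (n - 1) + 1 := by omega
      rw [hnn, Finset.prod_range_succ']
      rw [mul_comm]
      congr 1
      · push_cast; ring
      · apply Finset.prod_congr rfl
        intro j _
        push_cast; ring
    have hQ_eq : h (b + 1) = C * Q⁻¹ := by
      have hcast : ∀ j : ℕ, ((((b + 1 : ℕ)) : ℝ) + 1 + (j : ℝ)) * a + S
          = ((b : ℝ) + 2 + (j : ℝ)) * a + S := by
        intro j; push_cast; ring
      simp only [hhdef]
      rw [Finset.prod_congr (rfl : Finset.range (n-1) = Finset.range (n-1))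
        fun j _ => hcast j, hQdef]
    have e1 : P⁻¹ = x * R⁻¹ := by
      rw [hR1, mul_inv, ← mul_assoc, mul_comm x, mul_assoc, mul_inv_cancel₀ (ne_of_gt hx_pos),
        mul_one]
    have e2 : Q⁻¹ = y * R⁻¹ := by
      rw [hR2, mul_inv, ← mul_assoc, mul_inv_cancel₀ (ne_of_gt hy_pos), one_mul]
    have hxy : x - y = ((n : ℝ) - 1) * a := by rw [hxdef, hydef]; ring
    have hCmul : C * (((n : ℝ) - 1) * a) = 1 := by
      rw [hCdef]
      exact inv_mul_cancel₀ (by positivity)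
    calc h b - h (b + 1) = C * P⁻¹ - C * Q⁻¹ := by rw [hQ_eq]
      _ = C * (x * R⁻¹) - C * (y * R⁻¹) := by rw [e1, e2]
      _ = (C * (x - y)) * R⁻¹ := by ring
      _ = R⁻¹ := by rw [hxy, hCmul, one_mul]
      _ = g b := by simp only [hgdef, hRdef]
  -- h tends to zero
  have htend : Tendsto h atTop (𝓝 0) := by
    have hfactor : ∀ j : ℕ, Tendsto (fun b : ℕ => (((b : ℝ) + 1 + j) * a + S)⁻¹) atTop (𝓝 0) := by
      intro j
      apply Tendsto.inv_tendsto_atTop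
      apply tendsto_atTop_add_const_right
      apply Tendsto.atTop_mul_const ha
      apply tendsto_atTop_add_const_right
      apply tendsto_atTop_add_const_right
      exact tendsto_natCast_atTop_atTop
    have hprodt : Tendsto (fun b : ℕ =>
        ∏ j ∈ Finset.range (n - 1), (((b : ℝ) + 1 + j) * a + S)⁻¹) atTop
        (𝓝 (∏ _j ∈ Finset.range (n - 1), (0 : ℝ))) :=
      tendsto_finset_prod _ (fun j _ => hfactor j)
    have hz : (∏ _j ∈ Finset.range (n - 1), (0 : ℝ)) = 0 := by
      rw [Finset.prod_const, Finset.card_range]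
      exact zero_pow (by omega)
    rw [hz] at hprodt
    have hmul := hprodt.const_mul C
    rw [mul_zero] at hmul
    apply hmul.congr
    intro b
    simp only [hhdef]
    rw [Finset.prod_inv_distrib]
  -- HasSum g (h 0)
  have hg_nonneg : ∀ b, 0 ≤ g b := fun b => le_of_lt (inv_pos.mpr (hprod_pos b))
  have hpartial : ∀ m : ℕ, ∑ b ∈ Finset.range m, g b = h 0 - h m := by
    intro m
    rw [← Finset.sum_range_sub' h m]
    exact Finset.sum_congr rfl fun i _ => (htele i).symm
  have hsumg : HasSum g (h 0) := by
    rw [hasSum_iff_tendsto_nat_of_nonneg hg_nonneg]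
    have h1 : Tendsto (fun m : ℕ => h 0 - h m) atTop (𝓝 (h 0 - 0)) :=
      tendsto_const_nhds.sub htend
    rw [sub_zero] at h1
    exact h1.congr fun m => (hpartial m).symm
  -- summability of the series
  set f : ℕ → ℝ := fun b => 1 / ∏ k ∈ Finset.range n, T b k with hfdef
  have hTprod_pos : ∀ b, 0 < ∏ k ∈ Finset.range n, T b k :=
    fun b => Finset.prod_pos fun k hk => hT_pos b k (Finset.mem_range.mp hk)
  have hsplit : ∀ b, (∏ k ∈ Finset.range n, T b k)
      = (∏ k ∈ Finset.range 2, T b k) * ∏ k ∈ Finset.Ico 2 n, T b k := by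
    intro b
    simp only [Finset.range_eq_Ico]
    exact (Finset.prod_Ico_consecutive _ (by omega) hn).symm
  have hlow : ∀ b : ℕ, ((b : ℝ) + 1) * a * (((b : ℝ) + 1) * a) * a ^ (n - 2)
      ≤ ∏ k ∈ Finset.range n, T b k := by
    intro b
    rw [hsplit b]
    have pos0 : (0:ℝ) < ((b : ℝ) + 1) * a := by positivity
    have h2 : ((b : ℝ) + 1) * a * (((b : ℝ) + 1) * a) ≤ ∏ k ∈ Finset.range 2, T b k := by
      rw [Finset.prod_range_succ, Finset.prod_range_one]
      exact mul_le_mul (hT_ge b 0 (by omega)) (hT_ge b 1 (by omega)) (le_of_lt pos0)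
        (le_of_lt (hT_pos b 0 (by omega)))
    have h3 : a ^ (n - 2) ≤ ∏ k ∈ Finset.Ico 2 n, T b k := by
      have hc : a ^ (n - 2) = ∏ _k ∈ Finset.Ico 2 n, a := by
        rw [Finset.prod_const, Nat.card_Ico]
      rw [hc]
      exact Finset.prod_le_prod (fun k _ => le_of_lt ha)
        (fun k hk => hT_ge_a b k (Finset.mem_Ico.mp hk).2)
    exact mul_le_mul h2 h3 (by positivity)
      (le_of_lt (Finset.prod_pos fun k hk => hT_pos b k (by
        have := Finset.mem_range.mp hk; omega)))
  have hf_le : ∀ b : ℕ, f b ≤ (a ^ 2 * a ^ (n - 2))⁻¹ * (((b : ℝ) + 1) ^ 2)⁻¹ := by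
    intro b
    simp only [hfdef, one_div]
    calc (∏ k ∈ Finset.range n, T b k)⁻¹
        ≤ (((b : ℝ) + 1) * a * (((b : ℝ) + 1) * a) * a ^ (n - 2))⁻¹ :=
          inv_anti₀ (by positivity) (hlow b)
      _ = (a ^ 2 * a ^ (n - 2))⁻¹ * (((b : ℝ) + 1) ^ 2)⁻¹ := by
          rw [show ((b : ℝ) + 1) * a * (((b : ℝ) + 1) * a) * a ^ (n - 2)
            = (a ^ 2 * a ^ (n - 2)) * ((b : ℝ) + 1) ^ 2 from by ring, mul_inv]
  have hBsum : Summable (fun b : ℕ => (((b : ℝ) + 1) ^ 2)⁻¹) := by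
    have h1 : Summable (fun m : ℕ => 1 / (m : ℝ) ^ 2) :=
      Real.summable_one_div_nat_pow.mpr (by norm_num)
    have h2 := (summable_nat_add_iff 1).mpr h1
    apply h2.congr
    intro b
    push_cast
    rw [one_div]
  have hfsum : Summable f := by
    apply Summable.of_nonneg_of_le _ hf_le (hBsum.mul_left _)
    intro b
    simp only [hfdef]
    exact le_of_lt (one_div_pos.mpr (hTprod_pos b))
  have hgf : ∀ b, g b ≤ f b := by
    intro b
    simp only [hfdef, hgdef, one_div]
    apply inv_anti₀ (hTprod_pos b)
    exact Finset.prod_le_prod (fun k hk => le_of_lt (hT_pos b k (Finset.mem_range.mp hk)))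
      (fun k hk => hbound b k (Finset.mem_range.mp hk))
  -- rewrite the goal
  rw [hNeq 0 (by omega)]
  have hIccprod : (∏ j ∈ Finset.Icc 1 (n - 1),
      ∑ i, |(j : ℝ) * A 0 i + ∑ l ∈ Finset.Icc 1 n, A l i|)
      = ∏ j ∈ Finset.Icc 1 (n - 1), ((j : ℝ) * a + S) :=
    Finset.prod_congr rfl fun j _ => key2 j
  rw [hIccprod]
  have htsum_eq : (∑' b : ℕ,
        1 / ∏ k ∈ Finset.range n,
          ∑ i, |if k = 0 then ((b : ℝ) + 1) * A 0 i + A n i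
                else ((b : ℝ) + 2) * A 0 i + (∑ l ∈ Finset.Icc 1 k, A l i) + A n i|)
      = ∑' b : ℕ, f b := by
    apply tsum_congr
    intro b
    simp only [hfdef, one_div]
    congr 1
    exact Finset.prod_congr rfl fun k hk => factor_eq b k (Finset.mem_range.mp hk)
  rw [htsum_eq]
  have hLHS : (1 / (((n : ℝ) - 1) * a)) * (1 / ∏ j ∈ Finset.Icc 1 (n - 1), ((j : ℝ) * a + S))
      = h 0 := by
    have hIcc : Finset.Icc 1 (n - 1) = Finset.Ico 1 n := by
      rw [← Finset.Ico_add_one_right_eq_Icc]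
      congr 1
      omega
    have hprod_eq : (∏ j ∈ Finset.Icc 1 (n - 1), ((j : ℝ) * a + S))
        = ∏ j ∈ Finset.range (n - 1), ((((0:ℕ) : ℝ) + 1 + j) * a + S) := by
      rw [hIcc, Finset.prod_Ico_eq_prod_range]
      apply Finset.prod_congr (by congr 1) ?_
      intro j _
      push_cast
      ring_nf
    rw [hprod_eq]
    simp only [hhdef]
    rw [hCdef, one_div, one_div]
  rw [hLHS, ← hsumg.tsum_eq]
  exact Summable.tsum_le_tsum hgf hsumg.summable hfsum
end

section
/- Let B ≥ 0 and n ≥ 1. Suppose A₀, …, A_n are vectors in ℝ^{n+1} with nonnegative entries, positive ℓ¹ norms, and ‖A₀‖ ≤ ‖A_n‖; let b, b₁, …, b_{n-1} be nonnegative integers with each bᵢ ≤ B. Define recursively V₀ = b·A₀ + A_n and V_k = b_k·A_k + (previous coefficients) summing to V_n = (b_{n-1}+1)·A_{n-1} + (b_{n-2}+1)·A_{n-2} + ⋯ + (b₁+1)·A₁ + (b+1)·A₀ + A_n. Then ‖V₀‖/‖V_n‖ ≥ 1/((B+1)(n+1)). -/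
/-- Bounds on vertices: if the digits `b₁,…,b_{n-1}` are all at most `B`, then with
`V₀ = b·A₀ + A_n` and `V_n = ∑_{l=1}^{n-1}(b_l+1)A_l + (b+1)A₀ + A_n`,
the ratio of ℓ¹ norms satisfies `‖V₀‖/‖V_n‖ ≥ 1/((B+1)(n+1))`.
The vertex norms are nondecreasing in the index. -/
theorem stmt15 (n : ℕ) (hn : 1 ≤ n) (B : ℝ) (hB : 0 ≤ B)
    (A : ℕ → Fin (n + 1) → ℝ)
    (hA : ∀ k ≤ n, ∀ i, 0 ≤ A k i)
    (hpos : ∀ k ≤ n, 0 < ∑ i, |A k i|)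
    (hmono : ∀ k, k < n → ∑ i, |A k i| ≤ ∑ i, |A (k + 1) i|)
    (b : ℕ) (bs : ℕ → ℕ) (hbs : ∀ l, 1 ≤ l → l ≤ n - 1 → (bs l : ℝ) ≤ B) :
    (∑ i, |(b : ℝ) * A 0 i + A n i|) /
      (∑ i, |(∑ l ∈ Finset.Icc 1 (n - 1), ((bs l : ℝ) + 1) * A l i) +
        ((b : ℝ) + 1) * A 0 i + A n i|)
    ≥ 1 / ((B + 1) * ((n : ℝ) + 1)) := by
  set S : ℕ → ℝ := fun k => ∑ i, A k i with hSdef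
  have hSnn : ∀ k, k ≤ n → 0 ≤ S k := fun k hk =>
    Finset.sum_nonneg fun i _ => hA k hk i
  have habs : ∀ k, k ≤ n → (∑ i, |A k i|) = S k := fun k hk =>
    Finset.sum_congr rfl fun i _ => abs_of_nonneg (hA k hk i)
  have hmono' : ∀ k, k < n → S k ≤ S (k+1) := by
    intro k hk
    have := hmono k hk
    rwa [habs k hk.le, habs (k+1) hk] at this
  have key : ∀ j, j ≤ n → ∀ k, k ≤ j → S k ≤ S j := by
    intro j
    induction j with
    | zero =>
      intro _ k hk
      simp [Nat.le_zero] at hk; subst hk; exact le_rfl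
    | succ m ih =>
      intro hm k hk
      rcases eq_or_lt_of_le hk with h | h
      · subst h; exact le_rfl
      · exact le_trans (ih (Nat.le_of_succ_le hm) k (Nat.lt_succ_iff.mp h)) (hmono' m hm)
  have hSn : 0 < S n := by rw [← habs n le_rfl]; exact hpos n le_rfl
  -- numerator
  have hNum : (∑ i, |(b : ℝ) * A 0 i + A n i|) = (b : ℝ) * S 0 + S n := by
    rw [Finset.sum_congr rfl fun i _ => abs_of_nonneg
      (add_nonneg (mul_nonneg (Nat.cast_nonneg b) (hA 0 (Nat.zero_le n) i)) (hA n le_rfl i))]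
    simp [Finset.sum_add_distrib, ← Finset.mul_sum, hSdef]
  set Num : ℝ := (b : ℝ) * S 0 + S n with hNumdef
  have hNumpos : 0 < Num :=
    add_pos_of_nonneg_of_pos (mul_nonneg (Nat.cast_nonneg b) (hSnn 0 (Nat.zero_le n))) hSn
  -- each S k ≤ Num for k ≤ n
  have hSle : ∀ k, k ≤ n → S k ≤ Num := fun k hk =>
    le_trans (key n le_rfl k hk)
      (le_add_of_nonneg_left (mul_nonneg (Nat.cast_nonneg b) (hSnn 0 (Nat.zero_le n))))
  -- denominator
  have hmemle : ∀ l ∈ Finset.Icc 1 (n-1), l ≤ n := by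
    intro l hl
    have := (Finset.mem_Icc.mp hl).2
    omega
  have hDen : (∑ i, |(∑ l ∈ Finset.Icc 1 (n - 1), ((bs l : ℝ) + 1) * A l i) +
        ((b : ℝ) + 1) * A 0 i + A n i|)
      = (∑ l ∈ Finset.Icc 1 (n-1), ((bs l : ℝ) + 1) * S l) + ((b : ℝ) + 1) * S 0 + S n := by
    rw [Finset.sum_congr rfl fun i _ => abs_of_nonneg (add_nonneg (add_nonneg
      (Finset.sum_nonneg fun l hl => mul_nonneg (by positivity) (hA l (hmemle l hl) i))
      (mul_nonneg (by positivity) (hA 0 (Nat.zero_le n) i))) (hA n le_rfl i))]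
    rw [Finset.sum_add_distrib, Finset.sum_add_distrib, Finset.sum_comm]
    simp [← Finset.mul_sum, hSdef]
  have hDenle : (∑ l ∈ Finset.Icc 1 (n-1), ((bs l : ℝ) + 1) * S l) + ((b : ℝ) + 1) * S 0 + S n
      ≤ (B + 1) * ((n : ℝ) + 1) * Num := by
    have h1 : (∑ l ∈ Finset.Icc 1 (n-1), ((bs l : ℝ) + 1) * S l)
        ≤ ((n : ℝ) - 1) * ((B + 1) * Num) := by
      calc (∑ l ∈ Finset.Icc 1 (n-1), ((bs l : ℝ) + 1) * S l)
          ≤ ∑ l ∈ Finset.Icc 1 (n-1), (B + 1) * Num := by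
            refine Finset.sum_le_sum fun l hl => ?_
            have hl1 := (Finset.mem_Icc.mp hl).1
            have hl2 := (Finset.mem_Icc.mp hl).2
            exact mul_le_mul (by linarith [hbs l hl1 hl2]) (hSle l (hmemle l hl))
              (hSnn l (hmemle l hl)) (by positivity)
        _ = ((n : ℝ) - 1) * ((B + 1) * Num) := by
            rw [Finset.sum_const, Nat.card_Icc]
            have : ((n - 1 + 1 - 1 : ℕ) : ℝ) = (n : ℝ) - 1 := by
              push_cast [Nat.sub_add_cancel hn]
              rw [Nat.cast_sub hn]; simp
            rw [nsmul_eq_mul, this]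
    have h2 : ((b : ℝ) + 1) * S 0 + S n ≤ 2 * Num := by
      have hS0 : S 0 ≤ Num := hSle 0 (Nat.zero_le n)
      have : ((b : ℝ) + 1) * S 0 + S n = Num + S 0 := by rw [hNumdef]; ring
      linarith
    have hn1 : (1 : ℝ) ≤ (n : ℝ) := by exact_mod_cast hn
    nlinarith [hNumpos.le, hB]
  rw [hNum, hDen, ge_iff_le, div_le_div_iff₀ (by positivity) (by
    calc (0:ℝ) < S n := hSn
      _ ≤ _ := le_add_of_nonneg_left (add_nonneg
          (Finset.sum_nonneg fun l hl => mul_nonneg (by positivity) (hSnn l (hmemle l hl)))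
          (mul_nonneg (by positivity) (hSnn 0 (Nat.zero_le n)))))]
  calc 1 * ((∑ l ∈ Finset.Icc 1 (n-1), ((bs l : ℝ) + 1) * S l) + ((b : ℝ) + 1) * S 0 + S n)
      = (∑ l ∈ Finset.Icc 1 (n-1), ((bs l : ℝ) + 1) * S l) + ((b : ℝ) + 1) * S 0 + S n := one_mul _
    _ ≤ (B + 1) * ((n : ℝ) + 1) * Num := hDenle
    _ = Num * ((B + 1) * ((n : ℝ) + 1)) := by ring
end
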